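/- arXiv:1410.8592 — 3 statements merged into one kernel-verified Lean document; each statement's English description precedes it below -/
import Mathlib

section
/- If θ(n) = n + o(n^s) as n → ∞ for some fixed real s with 3/4 ≤ s < 1, then for every h > 0 the number of primes in the interval (n, (1+h)n] tends to infinity as n → ∞. -/
/-!
Writing `c = 1 + h`, the hypothesis gives `θ x = x + o(x)`, hence
`θ (c x) - θ x = (c - 1) x + o(x)`. Every prime of `(n, c n]` contributes at most
`log (c n) = o(n)` to this difference, so their number is at least `(h + o(1)) n / log (c n)`,
which tends to infinity.
-/

open Filter Asymptotics Finset Real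

theorem isLittleO_rpow_id_atTop {s : ℝ} (hs : s < 1) : (fun x : ℝ => x ^ s) =o[atTop] id := by
  refine (isLittleO_iff_tendsto' ?_).2 ((tendsto_rpow_neg_atTop (sub_pos.2 hs)).congr' ?_)
  · filter_upwards [eventually_ne_atTop 0] with x hx hx0 using absurd hx0 hx
  · filter_upwards [eventually_gt_atTop 0] with x hx
    rw [neg_sub, rpow_sub hx, rpow_one, id]

theorem tendsto_atTop_of_le_mul_of_isLittleO {α : Type*} {l : Filter α} {a b c : α → ℝ}
    (hbc : b =o[l] c) (hb : ∀ᶠ x in l, 0 < b x) (hc : ∀ᶠ x in l, 0 ≤ c x)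
    (habc : ∀ᶠ x in l, c x ≤ a x * b x) : Tendsto a l atTop := by
  refine tendsto_atTop.2 fun K => ?_
  have hK : 0 < |K| + 1 := by positivity
  filter_upwards [hbc.bound (inv_pos.2 hK), hb, hc, habc] with x hbound hbx hcx hx
  rw [norm_of_nonneg hbx.le, norm_of_nonneg hcx, inv_mul_eq_div, le_div_iff₀ hK] at hbound
  nlinarith [le_abs_self K]

namespace Chebyshev

theorem theta_eq_sum_range (x : ℝ) :
    θ x = ∑ p ∈ (range (⌊x⌋₊ + 1)).filter Nat.Prime, log p := by
  rw [theta_eq_sum_Icc, Nat.range_succ_eq_Icc_zero]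

theorem theta_sub_theta_eq_sum_Ioc {x y : ℝ} (hxy : x ≤ y) :
    θ y - θ x = ∑ p ∈ (Ioc ⌊x⌋₊ ⌊y⌋₊).filter Nat.Prime, log p := by
  simp only [theta, sum_filter]
  rw [sub_eq_iff_eq_add', sum_Ioc_consecutive _ (Nat.zero_le _) (Nat.floor_le_floor hxy)]

theorem theta_sub_theta_le_card_mul_log {x y : ℝ} (hxy : x ≤ y) :
    θ y - θ x ≤ #((Ioc ⌊x⌋₊ ⌊y⌋₊).filter Nat.Prime) * log y := by
  rw [theta_sub_theta_eq_sum_Ioc hxy, ← nsmul_eq_mul]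
  refine sum_le_card_nsmul _ _ _ fun p hp => ?_
  simp only [mem_filter, mem_Ioc] at hp
  exact log_le_log (by exact_mod_cast hp.2.pos) ((Nat.le_floor_iff' hp.2.ne_zero).1 hp.1.2)

theorem isLittleO_theta_sub_id_of_natCast
    (hθ : (fun n : ℕ => θ n - n) =o[atTop] fun n : ℕ => (n : ℝ)) :
    (fun x => θ x - x) =o[atTop] id := by
  have hfloor : (fun x : ℝ => (⌊x⌋₊ : ℝ)) =O[atTop] id := by
    refine IsBigO.of_bound 1 ?_
    filter_upwards [eventually_ge_atTop 0] with x hx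
    rw [one_mul, norm_of_nonneg (Nat.cast_nonneg _), id, norm_of_nonneg hx]
    exact Nat.floor_le hx
  have hfract : (fun x : ℝ => x - ⌊x⌋₊) =o[atTop] id := by
    refine (IsBigO.of_bound 1 ?_).trans_isLittleO (isLittleO_const_id_atTop (1 : ℝ))
    filter_upwards [eventually_ge_atTop 0] with x hx
    rw [one_mul, norm_one, norm_of_nonneg (sub_nonneg.2 (Nat.floor_le hx))]
    linarith [Nat.lt_floor_add_one x]
  refine (((hθ.comp_tendsto tendsto_nat_floor_atTop).trans_isBigO hfloor).sub hfract).congr' ?_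
    EventuallyEq.rfl
  filter_upwards with x
  simp only [Function.comp_apply, ← theta_eq_theta_coe_floor]
  ring

theorem isLittleO_theta_mul_sub_theta_sub_mul (hθ : (fun x => θ x - x) =o[atTop] id) {c : ℝ}
    (hc : 0 < c) : (fun x => θ (c * x) - θ x - (c - 1) * x) =o[atTop] id := by
  have hθc : (fun x => θ (c * x) - c * x) =o[atTop] id :=
    (hθ.comp_tendsto (tendsto_id.const_mul_atTop hc)).trans_isBigO (isBigO_const_mul_self c id _)
  exact (hθc.sub hθ).congr' (.of_forall fun x => by ring) EventuallyEq.rfl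

theorem isLittleO_log_mul_theta_mul_sub_theta (hθ : (fun x => θ x - x) =o[atTop] id) {c : ℝ}
    (hc : 1 < c) : (fun x => log (c * x)) =o[atTop] fun x => θ (c * x) - θ x := by
  have hc0 : 0 < c := by linarith
  have hlog : (fun x => log (c * x)) =o[atTop] id :=
    (isLittleO_log_id_atTop.comp_tendsto (tendsto_id.const_mul_atTop hc0)).trans_isBigO
      (isBigO_const_mul_self c id _)
  have hequiv : (fun x => θ (c * x) - θ x) ~[atTop] fun x => (c - 1) * x :=
    IsLittleO.isEquivalent <| (isLittleO_theta_mul_sub_theta_sub_mul hθ hc0).trans_isBigO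
      (isBigO_self_const_mul (sub_ne_zero.2 hc.ne') id _)
  exact hlog.trans_isBigO <| (isBigO_self_const_mul (sub_ne_zero.2 hc.ne') id _).trans
    hequiv.isBigO_symm

end Chebyshev

theorem primes_in_interval_tendsto_atTop_general
    (θ : ℝ → ℝ)
    (hθ : ∀ x : ℝ, θ x =
      ∑ p ∈ (Finset.range (⌊x⌋₊ + 1)).filter Nat.Prime, Real.log p)
    (s : ℝ) (hs2 : s < 1)
    (hasymp : (fun n : ℕ => θ n - n) =o[atTop] fun n : ℕ => (n : ℝ) ^ s) :
    ∀ h : ℝ, 0 < h →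
      Tendsto (fun n : ℕ =>
          ((Finset.Ioc n ⌊(1 + h) * (n : ℝ)⌋₊).filter Nat.Prime).card)
        atTop atTop := by
  intro h hh
  obtain rfl : θ = Chebyshev.theta :=
    funext fun x => (hθ x).trans (Chebyshev.theta_eq_sum_range x).symm
  have htheta : (fun x => Chebyshev.theta x - x) =o[atTop] id :=
    Chebyshev.isLittleO_theta_sub_id_of_natCast <|
      hasymp.trans ((isLittleO_rpow_id_atTop hs2).comp_tendsto tendsto_natCast_atTop_atTop)
  have hc : 1 < 1 + h := by linarith
  have hle : ∀ n : ℕ, (n : ℝ) ≤ (1 + h) * n := fun n =>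
    le_mul_of_one_le_left n.cast_nonneg hc.le
  refine tendsto_natCast_atTop_iff.1 <| tendsto_atTop_of_le_mul_of_isLittleO
    ((Chebyshev.isLittleO_log_mul_theta_mul_sub_theta htheta hc).comp_tendsto
      tendsto_natCast_atTop_atTop)
    ?_ (.of_forall fun n => sub_nonneg.2 (Chebyshev.theta_mono (hle n))) ?_
  · filter_upwards [eventually_ge_atTop 1] with n hn
    exact log_pos (one_lt_mul_of_lt_of_le hc (by exact_mod_cast hn))
  · filter_upwards with n
    simpa only [Function.comp_apply, Nat.floor_natCast] using
      Chebyshev.theta_sub_theta_le_card_mul_log (hle n)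

theorem primes_in_interval_tendsto_atTop
    (θ : ℝ → ℝ)
    (hθ : ∀ x : ℝ, θ x =
      ∑ p ∈ (Finset.range (⌊x⌋₊ + 1)).filter Nat.Prime, Real.log p)
    (s : ℝ) (hs1 : 3 / 4 ≤ s) (hs2 : s < 1)
    (hasymp : (fun n : ℕ => θ n - n) =o[atTop] fun n : ℕ => (n : ℝ) ^ s) :
    ∀ h : ℝ, 0 < h →
      Tendsto (fun n : ℕ =>
          ((Finset.Ioc n ⌊(1 + h) * (n : ℝ)⌋₊).filter Nat.Prime).card)
        atTop atTop :=
  primes_in_interval_tendsto_atTop_general θ hθ s hs2 hasymp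
end

section
/- The sum ∑_{p ≤ n, p prime} 1/p − log(log n) converges to a finite limit (the Mertens constant) as n → ∞. -/
/-!
Write `T(n) = ∑_{p ≤ n} log p / p`. Legendre's formula expresses `log n!` as
`∑_{p ≤ n} v_p(n!) log p` with `n/p - 1 ≤ v_p(n!) ≤ n/(p-1)`; together with
`n log n - n ≤ log n! ≤ n log n` and Chebyshev's bound `θ(n) ≤ n log 4` this gives
Mertens' first theorem `T(n) = log n + O(1)`. Abel summation with the weights `1 / log k`
writes `∑_{p ≤ n} 1/p - log log n` as `T(n) / log n`, which tends to `1`, plus a partial sum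
of a series whose `k`-th term compares `T(k) (1/log k - 1/log (k+1))` with
`log log (k+1) - log log k`. Since `T(k) - log k` is bounded, that term is
`O(1/log k - 1/log (k+1))`, so the series converges absolutely by telescoping.
-/

open Filter Finset Real
open scoped Nat Topology Asymptotics

lemma summable_of_abs_le_sub_succ {f g : ℕ → ℝ} {c : ℝ} (hg : ∀ n, c ≤ g n)
    (h : ∀ n, |f n| ≤ g n - g (n + 1)) : Summable f := by
  refine Summable.of_abs (summable_of_sum_range_le (c := g 0 - c) (fun n ↦ abs_nonneg _) ?_)
  intro n
  calc ∑ k ∈ range n, |f k| ≤ ∑ k ∈ range n, (g k - g (k + 1)) :=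
        sum_le_sum fun k _ ↦ h k
    _ = g 0 - g n := sum_range_sub' g n
    _ ≤ g 0 - c := by linarith [hg n]

lemma tendsto_div_nhds_one_of_abs_sub_le {α : Type*} {l : Filter α} {a b : α → ℝ} {C : ℝ}
    (hb : Tendsto b l atTop) (h : ∀ x, |a x - b x| ≤ C) :
    Tendsto (fun x ↦ a x / b x) l (𝓝 1) := by
  have hbound : (a - b) =O[l] (fun _ ↦ (1 : ℝ)) :=
    Asymptotics.isBigO_of_le' (c := C) l fun x ↦ by simpa using h x
  have hequiv : a ~[l] b := hbound.trans_isLittleO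
    ((Asymptotics.isLittleO_one_left_iff ℝ).mpr (tendsto_norm_atTop_atTop.comp hb))
  exact (Asymptotics.isEquivalent_iff_tendsto_one (hb.eventually_ne_atTop 0)).mp hequiv
lemma abs_log_sub_log_sub_le {a b : ℝ} (ha : 0 < a) (hab : a ≤ b) :
    |log b - log a - (b - a) / b| ≤ (b - a) * (1 / a - 1 / b) := by
  have hb : 0 < b := ha.trans_le hab
  have hlog : log b - log a = log (b / a) := (log_div hb.ne' ha.ne').symm
  have hlower : (b - a) / b ≤ log (b / a) := by
    have := one_sub_inv_le_log_of_pos (div_pos hb ha)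
    rwa [inv_div, one_sub_div hb.ne'] at this
  have hupper : log (b / a) ≤ (b - a) / a := by
    have := log_le_sub_one_of_pos (div_pos hb ha)
    rwa [div_sub_one ha.ne'] at this
  rw [abs_of_nonneg (by linarith), hlog]
  have : (b - a) / a - (b - a) / b = (b - a) * (1 / a - 1 / b) := by ring
  linarith

lemma abs_mul_inv_sub_sub_log_le {t a b C : ℝ} (ha : 0 < a) (hab : a ≤ b) (hba : b ≤ a + 1)
    (ht : |t - a| ≤ C) :
    |t * (1 / a - 1 / b) - (log b - log a)| ≤ (C + 1) * (1 / a - 1 / b) := by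
  have hd : 0 ≤ 1 / a - 1 / b := sub_nonneg.mpr (one_div_le_one_div_of_le ha hab)
  have hsplit : t * (1 / a - 1 / b) - (log b - log a)
      = (t - a) * (1 / a - 1 / b) - (log b - log a - (b - a) / b) := by
    have hb : b ≠ 0 := (ha.trans_le hab).ne'
    field_simp; ring
  calc |t * (1 / a - 1 / b) - (log b - log a)|
      ≤ |t - a| * (1 / a - 1 / b) + |log b - log a - (b - a) / b| := by
        rw [hsplit, ← abs_of_nonneg hd, ← abs_mul, abs_of_nonneg hd]; exact abs_sub _ _
    _ ≤ C * (1 / a - 1 / b) + 1 * (1 / a - 1 / b) := by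
        gcongr
        exact (abs_log_sub_log_sub_le ha hab).trans (by gcongr; linarith)
    _ = (C + 1) * (1 / a - 1 / b) := by ring

lemma log_div_mul_sub_one_le (k : ℕ) :
    log k / (k * (k - 1)) ≤ 4 * ((k : ℝ) ^ (3 / 2 : ℝ))⁻¹ := by
  rcases lt_or_ge k 2 with hk | hk
  · interval_cases k <;> simp
  have hk' : (2 : ℝ) ≤ k := by exact_mod_cast hk
  have hk0 : (0 : ℝ) < k := by linarith
  have hlog : log k ≤ 2 * (k : ℝ) ^ (1 / 2 : ℝ) := by
    have := log_le_rpow_div hk0.le (by norm_num : (0 : ℝ) < 1 / 2); linarith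
  have hsplit : (k : ℝ) ^ (1 / 2 : ℝ) * (k : ℝ) ^ (3 / 2 : ℝ) = k * k := by
    rw [← rpow_add hk0]; norm_num; ring
  have hpow : 0 < (k : ℝ) ^ (3 / 2 : ℝ) := rpow_pos_of_pos hk0 _
  rw [div_le_iff₀ (by nlinarith), ← div_eq_mul_inv, div_mul_eq_mul_div, le_div_iff₀ hpow]
  nlinarith [rpow_nonneg hk0.le (1 / 2 : ℝ)]

lemma log_div_mul_sub_one_nonneg (k : ℕ) : 0 ≤ log k / (k * (k - 1)) := by
  rcases k with _ | k
  · simp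
  · have : (0 : ℝ) ≤ k := k.cast_nonneg
    exact div_nonneg (log_natCast_nonneg _) (by push_cast; nlinarith)

lemma summable_log_div_mul_sub_one : Summable fun k : ℕ ↦ log k / (k * (k - 1)) :=
  Summable.of_nonneg_of_le log_div_mul_sub_one_nonneg log_div_mul_sub_one_le
    ((summable_nat_rpow_inv.mpr (by norm_num)).mul_left 4)

noncomputable def primeLogSum (n : ℕ) : ℝ := ∑ p ∈ n.primesLE, log p / p

lemma log_factorial_eq_sum_primesLE (n : ℕ) :
    log (n ! : ℕ) = ∑ p ∈ n.primesLE, (n !).factorization p * log p := by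
  rw [log_nat_eq_sum_factorization]
  refine Finsupp.sum_of_support_subset _ (fun p hp ↦ ?_) _ (fun _ _ ↦ by simp)
  rw [Nat.support_factorization, Nat.mem_primeFactors] at hp
  exact Nat.mem_primesLE.mpr ⟨(hp.1.dvd_factorial).mp hp.2.1, hp.1⟩

lemma log_factorial_le (n : ℕ) : log (n ! : ℕ) ≤ n * log n := by
  rw [← log_pow]
  exact log_le_log (by positivity) (mod_cast n.factorial_le_pow)

lemma le_log_factorial (n : ℕ) : n * log n - n ≤ log (n ! : ℕ) := by
  rcases eq_or_ne n 0 with rfl | hn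
  · simp
  have h2π : 0 ≤ log (2 * π) := log_nonneg (by linarith [pi_gt_three])
  linarith [Stirling.le_log_factorial_stirling hn, log_natCast_nonneg n]

lemma div_sub_one_le_factorization_factorial {p : ℕ} (hp : p.Prime) (n : ℕ) :
    (n : ℝ) / p - 1 ≤ (n !).factorization p := by
  have hfirst : n / p ≤ (n !).factorization p := by
    rw [Nat.factorization_factorial hp (b := Nat.log p n + 2) (by omega)]
    simpa using single_le_sum (f := fun i ↦ n / p ^ i) (fun _ _ ↦ Nat.zero_le _)
      (by simp : 1 ∈ Ico 1 (Nat.log p n + 2))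
  calc (n : ℝ) / p - 1 ≤ (n / p : ℕ) := by
        rw [← Nat.floor_div_eq_div (K := ℝ)]; exact (Nat.sub_one_lt_floor _).le
    _ ≤ _ := by exact_mod_cast hfirst

lemma factorization_factorial_le_div_sub_one {p : ℕ} (hp : p.Prime) (n : ℕ) :
    ((n !).factorization p : ℝ) ≤ n / (p - 1) := by
  have hp1 : (1 : ℝ) < p := by exact_mod_cast hp.one_lt
  have hle : (p - 1) * (n !).factorization p ≤ n :=
    (Nat.sub_one_mul_factorization_factorial hp).trans_le (Nat.sub_le _ _)
  rw [le_div_iff₀ (by linarith), mul_comm, ← Nat.cast_pred hp.pos]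
  exact_mod_cast hle

lemma primeLogSum_le (n : ℕ) : primeLogSum n ≤ log n + log 4 := by
  rcases eq_or_ne n 0 with rfl | hn
  · simp only [primeLogSum, Nat.primesLE_zero, sum_empty, Nat.cast_zero, log_zero]
    positivity
  have hn0 : (0 : ℝ) < n := by positivity
  have hlog4 : Chebyshev.theta n ≤ n * log 4 := by
    linarith [Chebyshev.theta_le_log4_mul_x hn0.le]
  have key : n * primeLogSum n ≤ log (n ! : ℕ) + Chebyshev.theta n := by
    rw [primeLogSum, mul_sum, log_factorial_eq_sum_primesLE, Chebyshev.theta_eq_sum_primesLE_log,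
      ← sum_add_distrib]
    refine sum_le_sum fun p hp ↦ ?_
    have hp := Nat.prime_of_mem_primesLE hp
    have hp0 : (0 : ℝ) < p := by exact_mod_cast hp.pos
    calc (n : ℝ) * (log p / p) = (n / p - 1 + 1) * log p := by field_simp; ring
      _ ≤ ((n !).factorization p + 1) * log p := by
          gcongr
          exact div_sub_one_le_factorization_factorial hp n
      _ = _ := by ring
  nlinarith [log_factorial_le n]

lemma log_sub_le_primeLogSum (n : ℕ) :
    log n - 1 - ∑' k : ℕ, log k / (k * (k - 1)) ≤ primeLogSum n := by
  set R := ∑' k : ℕ, log k / (k * (k - 1))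
  have hR : 0 ≤ R := tsum_nonneg log_div_mul_sub_one_nonneg
  rcases eq_or_ne n 0 with rfl | hn
  · simp only [primeLogSum, Nat.primesLE_zero, sum_empty, Nat.cast_zero, log_zero]
    linarith
  have hn0 : (0 : ℝ) < n := by positivity
  have hsum : ∑ p ∈ n.primesLE, log p / (p * (p - 1)) ≤ R :=
    summable_log_div_mul_sub_one.sum_le_tsum _ fun k _ ↦ log_div_mul_sub_one_nonneg k
  have key : log (n ! : ℕ) ≤ n * primeLogSum n + n * R := by
    calc log (n ! : ℕ)
        ≤ ∑ p ∈ n.primesLE, (n * (log p / p) + n * (log p / (p * (p - 1)))) := by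
          rw [log_factorial_eq_sum_primesLE]
          refine sum_le_sum fun p hp ↦ ?_
          have hp := Nat.prime_of_mem_primesLE hp
          have hp1 : (1 : ℝ) < p := by exact_mod_cast hp.one_lt
          calc ((n !).factorization p : ℝ) * log p ≤ n / (p - 1) * log p := by
                gcongr
                exact factorization_factorial_le_div_sub_one hp n
            _ = _ := by
                have : (p : ℝ) - 1 ≠ 0 := by linarith
                field_simp; ring
      _ ≤ n * primeLogSum n + n * R := by
          rw [sum_add_distrib, ← mul_sum, ← mul_sum, primeLogSum]
          gcongr
  nlinarith [le_log_factorial n]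

lemma exists_abs_primeLogSum_sub_log_le : ∃ C, ∀ n, |primeLogSum n - log n| ≤ C := by
  set R := ∑' k : ℕ, log k / (k * (k - 1))
  refine ⟨max (log 4) (1 + R), fun n ↦ abs_le.mpr ⟨?_, ?_⟩⟩
  · linarith [log_sub_le_primeLogSum n, le_max_right (log 4) (1 + R)]
  · linarith [primeLogSum_le n, le_max_left (log 4) (1 + R)]

lemma tendsto_primeLogSum_div_log :
    Tendsto (fun n : ℕ ↦ primeLogSum n / log n) atTop (𝓝 1) := by
  obtain ⟨C, hC⟩ := exists_abs_primeLogSum_sub_log_le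
  exact tendsto_div_nhds_one_of_abs_sub_le (tendsto_log_atTop.comp tendsto_natCast_atTop_atTop) hC

lemma primeLogSum_eq_sum_range (n : ℕ) :
    primeLogSum n = ∑ k ∈ range (n + 1), if k.Prime then log k / k else 0 :=
  sum_filter _ _

lemma sum_primesLE_one_div_eq (n : ℕ) :
    ∑ p ∈ n.primesLE, 1 / (p : ℝ) = primeLogSum n / log n +
      ∑ k ∈ range n, primeLogSum k * (1 / log k - 1 / log (k + 1)) := by
  have hparts := sum_range_by_parts (fun k ↦ 1 / log k)
    (fun k ↦ if k.Prime then log k / k else 0) (n + 1)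
  simp only [smul_eq_mul, add_tsub_cancel_right, ← primeLogSum_eq_sum_range] at hparts
  have hterm (k : ℕ) : 1 / log k * (if k.Prime then log k / k else 0)
      = if k.Prime then 1 / (k : ℝ) else 0 := by
    split_ifs with hk
    · have : log k ≠ 0 := (log_pos (by exact_mod_cast hk.one_lt)).ne'
      field_simp
    · rw [mul_zero]
  simp only [hterm, ← sum_filter] at hparts
  rw [Nat.primesLE_eq_filter_range, hparts, sub_eq_add_neg, ← sum_neg_distrib]
  congr 1
  · ring
  · refine sum_congr rfl fun k _ ↦ ?_
    push_cast; ring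

noncomputable def mertensSeriesTerm (k : ℕ) : ℝ :=
  primeLogSum k * (1 / log k - 1 / log (k + 1)) - (log (log (k + 1)) - log (log k))

lemma sum_primesLE_one_div_sub_log_log (n : ℕ) :
    ∑ p ∈ n.primesLE, 1 / (p : ℝ) - log (log n) =
      primeLogSum n / log n + ∑ k ∈ range n, mertensSeriesTerm k := by
  -- the telescoping sum starts from the junk value `log (log 0) = 0`
  have htele := sum_range_sub (fun k : ℕ ↦ log (log k)) n
  simp only [Nat.cast_add, Nat.cast_one, Nat.cast_zero, log_zero, sub_zero] at htele
  simp only [sum_primesLE_one_div_eq, mertensSeriesTerm, sum_sub_distrib, htele]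
  ring

lemma abs_mertensSeriesTerm_le {C : ℝ} (hC : ∀ n, |primeLogSum n - log n| ≤ C) {k : ℕ}
    (hk : 2 ≤ k) : |mertensSeriesTerm k| ≤ (C + 1) * (1 / log k - 1 / log (k + 1)) := by
  have hk' : (2 : ℝ) ≤ k := by exact_mod_cast hk
  have hpos : 0 < log k := log_pos (by linarith)
  have hmono : log k ≤ log (k + 1) := log_le_log (by linarith) (by linarith)
  have hstep : log (k + 1) ≤ log k + 1 := by
    calc log (k + 1) ≤ log (2 * k) := log_le_log (by linarith) (by linarith)
      _ = log 2 + log k := log_mul two_ne_zero (by linarith)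
      _ ≤ log k + 1 := by linarith [log_two_lt_d9]
  exact abs_mul_inv_sub_sub_log_le hpos hmono hstep (hC k)

lemma summable_mertensSeriesTerm : Summable mertensSeriesTerm := by
  obtain ⟨C, hC⟩ := exists_abs_primeLogSum_sub_log_le
  have hC0 : 0 ≤ C := (abs_nonneg _).trans (hC 0)
  rw [← summable_nat_add_iff 2]
  refine summable_of_abs_le_sub_succ (c := 0)
    (g := fun k ↦ (C + 1) * (1 / log ((k + 2 : ℕ) : ℝ))) (fun _ ↦ by positivity) fun k ↦ ?_
  have hsucc : ((k + 1 + 2 : ℕ) : ℝ) = ((k + 2 : ℕ) : ℝ) + 1 := by push_cast; ring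
  rw [← mul_sub, hsucc]
  exact abs_mertensSeriesTerm_le hC le_add_self

theorem mertens_second_theorem :
    ∃ A : ℝ, Tendsto (fun n : ℕ =>
        (∑ p ∈ (Finset.range (n + 1)).filter Nat.Prime, 1 / (p : ℝ)) -
          Real.log (Real.log n)) atTop (nhds A) := by
  refine ⟨1 + ∑' k, mertensSeriesTerm k, ?_⟩
  refine (tendsto_primeLogSum_div_log.add
    summable_mertensSeriesTerm.hasSum.tendsto_sum_nat).congr fun n ↦ ?_
  exact (sum_primesLE_one_div_sub_log_log n).symm
end

section
/- Let d(n) denote the number of divisors of n and C the Euler–Mascheroni constant. Then ∑_{k=1}^n d(k) = n log n + (2C − 1)n + O(√n). -/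
/-!
Dirichlet's hyperbola method: the divisor sum counts lattice points `(a, b)` with `a * b ≤ N`,
and every such point has `a ≤ √N` or `b ≤ √N`. By inclusion–exclusion the count is
`2 ∑_{d ≤ √N} ⌊N / d⌋ - ⌊√N⌋²`, a sum of length `√N` only. Dropping the floors costs `O(√N)`,
and `N · H_{⌊√N⌋} = N (log √N + γ + O(1 / √N))`, so the remaining error is again `O(√N)`.
-/

open Filter Asymptotics Finset Real

namespace ArithmeticFunction

def hyperbolaLatticePoints (N : ℕ) : Finset (ℕ × ℕ) :=
  {x ∈ Ioc 0 N ×ˢ Ioc 0 N | x.1 * x.2 ≤ N}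

theorem mem_hyperbolaLatticePoints {N : ℕ} {x : ℕ × ℕ} :
    x ∈ hyperbolaLatticePoints N ↔ 0 < x.1 ∧ 0 < x.2 ∧ x.1 * x.2 ≤ N := by
  simp only [hyperbolaLatticePoints, mem_filter, mem_product, mem_Ioc]
  constructor
  · rintro ⟨⟨⟨ha, -⟩, hb, -⟩, hab⟩
    exact ⟨ha, hb, hab⟩
  · rintro ⟨ha, hb, hab⟩
    exact ⟨⟨⟨ha, (Nat.le_mul_of_pos_right _ hb).trans hab⟩,
      hb, (Nat.le_mul_of_pos_left _ ha).trans hab⟩, hab⟩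

theorem filter_fst_le_sqrt_union_filter_snd_le_sqrt (N : ℕ) :
    {x ∈ hyperbolaLatticePoints N | x.1 ≤ N.sqrt} ∪ {x ∈ hyperbolaLatticePoints N | x.2 ≤ N.sqrt}
      = hyperbolaLatticePoints N := by
  rw [← filter_or, filter_true_of_mem]
  intro x hx
  by_contra! h
  exact (Nat.lt_succ_sqrt N).not_ge
    ((Nat.mul_le_mul h.1 h.2).trans (mem_hyperbolaLatticePoints.1 hx).2.2)

theorem filter_fst_le_sqrt_inter_filter_snd_le_sqrt (N : ℕ) :
    {x ∈ hyperbolaLatticePoints N | x.1 ≤ N.sqrt} ∩ {x ∈ hyperbolaLatticePoints N | x.2 ≤ N.sqrt}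
      = Ioc 0 N.sqrt ×ˢ Ioc 0 N.sqrt := by
  ext x
  simp only [mem_inter, mem_filter, mem_hyperbolaLatticePoints, mem_product, mem_Ioc]
  constructor
  · rintro ⟨⟨⟨ha, hb, -⟩, has⟩, -, hbs⟩
    exact ⟨⟨ha, has⟩, hb, hbs⟩
  · rintro ⟨⟨ha, has⟩, hb, hbs⟩
    have hab := (Nat.mul_le_mul has hbs).trans (Nat.sqrt_le N)
    exact ⟨⟨⟨ha, hb, hab⟩, has⟩, ⟨ha, hb, hab⟩, hbs⟩

variable {R : Type*} [Semiring R]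

theorem sum_Ioc_mul_add_sum_mul_sum_eq (f g : ArithmeticFunction R) (N : ℕ) :
    ∑ n ∈ Ioc 0 N, (f * g) n + (∑ a ∈ Ioc 0 N.sqrt, f a) * ∑ b ∈ Ioc 0 N.sqrt, g b =
      ∑ a ∈ Ioc 0 N.sqrt, f a * ∑ b ∈ Ioc 0 (N / a), g b +
        ∑ b ∈ Ioc 0 N.sqrt, (∑ a ∈ Ioc 0 (N / b), f a) * g b := by
  have sum_left : ∑ x ∈ hyperbolaLatticePoints N with x.1 ≤ N.sqrt, f x.1 * g x.2 =
      ∑ a ∈ Ioc 0 N.sqrt, f a * ∑ b ∈ Ioc 0 (N / a), g b := by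
    simp_rw [mul_sum]
    refine sum_finset_product' (f := fun a b ↦ f a * g b) _ _ _ fun x ↦ ?_
    rw [mem_filter, mem_hyperbolaLatticePoints, mem_Ioc, mem_Ioc]
    constructor
    · rintro ⟨⟨ha, hb, hab⟩, has⟩
      exact ⟨⟨ha, has⟩, hb, (Nat.le_div_iff_mul_le ha).2 (by rwa [mul_comm])⟩
    · rintro ⟨⟨ha, has⟩, hb, hbN⟩
      exact ⟨⟨ha, hb, by rwa [mul_comm, ← Nat.le_div_iff_mul_le ha]⟩, has⟩
  have sum_right : ∑ x ∈ hyperbolaLatticePoints N with x.2 ≤ N.sqrt, f x.1 * g x.2 =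
      ∑ b ∈ Ioc 0 N.sqrt, (∑ a ∈ Ioc 0 (N / b), f a) * g b := by
    simp_rw [sum_mul]
    refine sum_finset_product_right' (f := fun a b ↦ f a * g b) _ _ _ fun x ↦ ?_
    rw [mem_filter, mem_hyperbolaLatticePoints, mem_Ioc, mem_Ioc]
    constructor
    · rintro ⟨⟨ha, hb, hab⟩, hbs⟩
      exact ⟨⟨hb, hbs⟩, ha, (Nat.le_div_iff_mul_le hb).2 hab⟩
    · rintro ⟨⟨hb, hbs⟩, ha, haN⟩
      exact ⟨⟨ha, hb, (Nat.le_div_iff_mul_le hb).1 haN⟩, hbs⟩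
  rw [sum_Ioc_mul_eq_sum_prod_filter, ← sum_left, ← sum_right, ← sum_union_inter,
    filter_fst_le_sqrt_union_filter_snd_le_sqrt, filter_fst_le_sqrt_inter_filter_snd_le_sqrt,
    sum_product, sum_mul_sum]
  rfl

theorem sum_Ioc_card_divisors_add_sqrt_mul_sqrt (N : ℕ) :
    ∑ n ∈ Ioc 0 N, #n.divisors + N.sqrt * N.sqrt = 2 * ∑ d ∈ Ioc 0 N.sqrt, N / d := by
  have key := sum_Ioc_mul_add_sum_mul_sum_eq zeta zeta N
  have zeta_mul_zeta : (zeta * zeta : ArithmeticFunction ℕ) = sigma 0 := by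
    rw [← zeta_mul_pow_eq_sigma, pow_zero_eq_zeta]
  simp only [zeta_mul_zeta, sigma_zero_apply, sum_Ioc_zeta] at key
  rw [key, two_mul]
  congr 1 <;> refine sum_congr rfl fun a ha ↦ ?_ <;>
    simp [zeta_apply_ne (mem_Ioc.1 ha).1.ne']

end ArithmeticFunction

theorem abs_sum_Ioc_div_sub_mul_harmonic_le (N s : ℕ) :
    |∑ d ∈ Ioc 0 s, ((N / d : ℕ) : ℝ) - N * harmonic s| ≤ s := by
  have hH : (N : ℝ) * harmonic s = ∑ d ∈ Ioc 0 s, (N : ℝ) / d := by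
    rw [harmonic_eq_sum_Icc]
    push_cast
    rw [mul_sum]
    rfl
  rw [hH, ← sum_sub_distrib]
  calc |∑ d ∈ Ioc 0 s, (((N / d : ℕ) : ℝ) - N / d)|
      ≤ ∑ d ∈ Ioc 0 s, |((N / d : ℕ) : ℝ) - N / d| := abs_sum_le_sum_abs _ _
    _ ≤ ∑ d ∈ Ioc 0 s, (1 : ℝ) := by
      refine sum_le_sum fun d _ ↦ ?_
      rw [← Nat.floor_div_eq_div (K := ℝ), abs_sub_comm,
        abs_of_nonneg (sub_nonneg.2 (Nat.floor_le (by positivity)))]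
      linarith [Nat.lt_floor_add_one ((N : ℝ) / d)]
    _ = s := by simp

theorem Real.log_add_one_sub_log_le {x : ℝ} (hx : 0 < x) : log (x + 1) - log x ≤ x⁻¹ := by
  rw [← log_div (by positivity) hx.ne']
  calc log ((x + 1) / x) ≤ (x + 1) / x - 1 := log_le_sub_one_of_pos (by positivity)
    _ = x⁻¹ := by field_simp; ring

theorem abs_harmonic_floor_sub_log_sub_eulerMascheroniConstant_le {x : ℝ} (hx : 1 ≤ x) :
    |(harmonic ⌊x⌋₊ : ℝ) - log x - eulerMascheroniConstant| ≤ (⌊x⌋₊ : ℝ)⁻¹ := by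
  set s := ⌊x⌋₊
  have hs : 0 < s := Nat.floor_pos.2 hx
  have hs' : (0 : ℝ) < s := by exact_mod_cast hs
  have log_floor_le : log s ≤ log x := log_le_log hs' (Nat.floor_le (by linarith))
  have log_le_log_floor_succ : log x ≤ log (s + 1) :=
    log_le_log (by linarith) (Nat.lt_floor_add_one x).le
  have lower := eulerMascheroniSeq_lt_eulerMascheroniConstant s
  have upper := eulerMascheroniConstant_lt_eulerMascheroniSeq' s
  rw [eulerMascheroniSeq] at lower
  rw [eulerMascheroniSeq', if_neg hs.ne'] at upper
  rw [abs_le]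
  constructor <;> linarith [Real.log_add_one_sub_log_le hs']

theorem Nat.abs_sub_sqrt_mul_sqrt_le (N : ℕ) : |(N : ℝ) - N.sqrt * N.sqrt| ≤ 2 * N.sqrt := by
  have lower : ((N.sqrt * N.sqrt : ℕ) : ℝ) ≤ N := by exact_mod_cast Nat.sqrt_le N
  have upper : (N : ℝ) ≤ ((N.sqrt * N.sqrt + N.sqrt + N.sqrt : ℕ) : ℝ) := by
    exact_mod_cast Nat.sqrt_le_add N
  push_cast at lower upper
  rw [abs_le]
  constructor <;> linarith [(N.sqrt.cast_nonneg : (0 : ℝ) ≤ N.sqrt)]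

theorem Nat.cast_mul_inv_sqrt_le {N : ℕ} (hN : 1 ≤ N) : (N : ℝ) * (N.sqrt : ℝ)⁻¹ ≤ 2 * √N := by
  have hs : (1 : ℝ) ≤ N.sqrt := by exact_mod_cast Nat.sqrt_pos.2 hN
  rw [← div_eq_mul_inv, div_le_iff₀ (by linarith)]
  calc (N : ℝ) = √N * √N := (Real.mul_self_sqrt (Nat.cast_nonneg _)).symm
    _ ≤ √N * (N.sqrt + 1) := by gcongr; exact Real.real_sqrt_lt_nat_sqrt_succ.le
    _ ≤ 2 * √N * N.sqrt := by nlinarith [Real.sqrt_nonneg N]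

theorem abs_sum_card_divisors_sub_le {N : ℕ} (hN : 1 ≤ N) :
    |∑ k ∈ Icc 1 N, (#k.divisors : ℝ) - (N * log N + (2 * eulerMascheroniConstant - 1) * N)|
      ≤ 8 * √N := by
  set s := N.sqrt
  set γ := eulerMascheroniConstant
  set H : ℝ := (harmonic s : ℝ)
  have hs_le : (s : ℝ) ≤ √N := Real.nat_sqrt_le_real_sqrt
  have hyperbola : ∑ k ∈ Icc 1 N, (#k.divisors : ℝ) =
      2 * ∑ d ∈ Ioc 0 s, ((N / d : ℕ) : ℝ) - s * s := by
    rw [eq_sub_iff_add_eq, show Icc 1 N = Ioc 0 N from rfl]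
    exact_mod_cast ArithmeticFunction.sum_Ioc_card_divisors_add_sqrt_mul_sqrt N
  set S := ∑ d ∈ Ioc 0 s, ((N / d : ℕ) : ℝ)
  have log_eq : log N = 2 * log √N := by
    rw [Real.log_sqrt (Nat.cast_nonneg _)]
    ring
  have floor_err : |S - N * H| ≤ s := abs_sum_Ioc_div_sub_mul_harmonic_le N s
  have harmonic_err : |H - log √N - γ| ≤ (s : ℝ)⁻¹ := by
    have := abs_harmonic_floor_sub_log_sub_eulerMascheroniConstant_le
      (Real.one_le_sqrt.2 (by exact_mod_cast hN : (1 : ℝ) ≤ N))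
    rwa [Real.nat_floor_real_sqrt_eq_nat_sqrt] at this
  have square_err := Nat.abs_sub_sqrt_mul_sqrt_le N
  have div_le := Nat.cast_mul_inv_sqrt_le hN
  calc |∑ k ∈ Icc 1 N, (#k.divisors : ℝ) - (N * log N + (2 * γ - 1) * N)|
      = |2 * (S - N * H) + 2 * N * (H - log √N - γ) + (N - s * s)| := by
        rw [hyperbola, log_eq]
        ring_nf
    _ ≤ |2 * (S - N * H)| + |2 * N * (H - log √N - γ)| + |(N : ℝ) - s * s| :=
        abs_add_three _ _ _
    _ = 2 * |S - N * H| + 2 * N * |H - log √N - γ| + |(N : ℝ) - s * s| := by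
        rw [abs_mul, abs_mul, abs_mul, abs_two, Nat.abs_cast]
    _ ≤ 2 * s + 2 * N * (s : ℝ)⁻¹ + 2 * s := by gcongr
    _ ≤ 8 * √N := by linarith

theorem dirichlet_divisor_theorem :
    (fun n : ℕ => (∑ k ∈ Finset.Icc 1 n, (k.divisors.card : ℝ)) -
        ((n : ℝ) * Real.log n + (2 * Real.eulerMascheroniConstant - 1) * n))
      =O[atTop] fun n : ℕ => Real.sqrt n := by
  refine IsBigO.of_bound 8 ?_
  filter_upwards [eventually_ge_atTop 1] with n hn
  rw [Real.norm_eq_abs, Real.norm_of_nonneg (Real.sqrt_nonneg _)]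
  exact abs_sum_card_divisors_sub_le hn
end
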